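/- arXiv:2601.17778 — 3 statements merged into one kernel-verified Lean document; each statement's English description precedes it below -/
import Mathlib

section
/- Suppose p : [0,∞) → [0,∞) is measurable, bounded on compact sets, and satisfies s·p(s) → f as s → ∞ for some constant f > 0. Then (1/log N)·∫_0^∞ e^{-s/N}·p(s) ds → f as N → ∞. -/
/-!
Given `ε > 0`, pick `A` with `f - ε ≤ s p(s) ≤ f + ε` for `s > A`. The integral over `(0, A]` is
bounded independently of `N`, while on `(A, ∞)` the integrand lies between `(f ∓ ε) e^{-s/N} / s`.
The integral of `e^{-s/N} / s` over `(A, ∞)` is `log (N / A) + O(1)`: from below compare it with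
`1/s - 1/N` on `(A, N]`, from above with `1/s` on `(A, N]` and with `e^{-s/N} / N` on `(N, ∞)`.
-/

open MeasureTheory Filter Set Real Topology

/-- The exponential integral `E₁(A / N)`, after the substitution `s = N t`. -/
noncomputable def dampedInvIntegral (A N : ℝ) : ℝ := ∫ s in Ioi A, exp (-s / N) * s⁻¹

lemma exp_neg_div_le_one {s N : ℝ} (hs : 0 ≤ s) (hN : 0 ≤ N) : exp (-s / N) ≤ 1 :=
  exp_le_one_iff.2 (div_nonpos_of_nonpos_of_nonneg (neg_nonpos.2 hs) hN)

lemma integrableOn_exp_neg_div_mul_inv_Ioi {A N : ℝ} (hA : 0 < A) (hN : 0 < N) :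
    IntegrableOn (fun s => exp (-s / N) * s⁻¹) (Ioi A) := by
  refine ((exp_neg_integrableOn_Ioi A (inv_pos.2 hN)).const_mul A⁻¹).mono'
    (by fun_prop) ((ae_restrict_iff' measurableSet_Ioi).2 (.of_forall fun s (hs : A < s) => ?_))
  have hs0 : 0 < s := hA.trans hs
  rw [norm_of_nonneg (by positivity)]
  calc exp (-s / N) * s⁻¹ ≤ exp (-s / N) * A⁻¹ := by gcongr
    _ = A⁻¹ * exp (-N⁻¹ * s) := by ring_nf

lemma log_div_sub_one_le_dampedInvIntegral {A N : ℝ} (hA : 0 < A) (hAN : A ≤ N) :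
    log (N / A) - 1 ≤ dampedInvIntegral A N := by
  have hN : 0 < N := hA.trans_le hAN
  have hinv : IntervalIntegrable (fun s : ℝ => s⁻¹) volume A N :=
    intervalIntegrable_inv_iff.2 (.inr fun h => hA.not_ge (uIcc_of_le hAN ▸ h).1)
  calc log (N / A) - 1 ≤ ∫ s in A..N, (s⁻¹ - N⁻¹) := by
        rw [intervalIntegral.integral_sub hinv intervalIntegrable_const, integral_inv_of_pos hA hN,
          intervalIntegral.integral_const, smul_eq_mul]
        have : (N - A) * N⁻¹ ≤ 1 := by rw [← div_eq_mul_inv, div_le_one hN]; linarith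
        linarith
    _ ≤ ∫ s in Ioc A N, exp (-s / N) * s⁻¹ := by
        rw [intervalIntegral.integral_of_le hAN]
        refine setIntegral_mono_on ((intervalIntegrable_iff_integrableOn_Ioc_of_le hAN).1
          (hinv.sub intervalIntegrable_const))
          ((integrableOn_exp_neg_div_mul_inv_Ioi hA hN).mono_set Ioc_subset_Ioi_self)
          measurableSet_Ioc fun s hs => ?_
        have hs0 : 0 < s := hA.trans hs.1
        have hexp : 1 - s / N ≤ exp (-s / N) := by linarith [add_one_le_exp (-s / N), neg_div N s]
        calc s⁻¹ - N⁻¹ = (1 - s / N) * s⁻¹ := by field_simp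
          _ ≤ exp (-s / N) * s⁻¹ := by gcongr
    _ ≤ dampedInvIntegral A N :=
        setIntegral_mono_set (integrableOn_exp_neg_div_mul_inv_Ioi hA hN)
          ((ae_restrict_iff' measurableSet_Ioi).2 (.of_forall fun s (hs : A < s) =>
            by have := hA.trans hs; positivity)) Ioc_subset_Ioi_self.eventuallyLE

lemma dampedInvIntegral_le_log_div_add_one {A N : ℝ} (hA : 0 < A) (hAN : A ≤ N) :
    dampedInvIntegral A N ≤ log (N / A) + 1 := by
  have hN : 0 < N := hA.trans_le hAN
  have hint := integrableOn_exp_neg_div_mul_inv_Ioi hA hN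
  have hbody : ∫ s in Ioc A N, exp (-s / N) * s⁻¹ ≤ log (N / A) := by
    rw [← integral_inv_of_pos hA hN, intervalIntegral.integral_of_le hAN]
    refine setIntegral_mono_on (hint.mono_set Ioc_subset_Ioi_self)
      ((intervalIntegrable_iff_integrableOn_Ioc_of_le hAN).1 ?_) measurableSet_Ioc
      fun s hs => ?_
    · exact intervalIntegrable_inv_iff.2 (.inr fun h => hA.not_ge (uIcc_of_le hAN ▸ h).1)
    · have hs0 : 0 < s := hA.trans hs.1
      exact mul_le_of_le_one_left (inv_nonneg.2 hs0.le) (exp_neg_div_le_one hs0.le hN.le)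
  -- On `(N, ∞)` we have `s⁻¹ ≤ N⁻¹`, and `∫_N^∞ e^{-s/N} ds / N = e^{-1}`.
  have htail : ∫ s in Ioi N, exp (-s / N) * s⁻¹ ≤ 1 := by
    have hval : ∫ s in Ioi N, N⁻¹ * exp (-N⁻¹ * s) = exp (-1) := by
      rw [integral_const_mul, integral_exp_mul_Ioi (neg_lt_zero.2 (inv_pos.2 hN))]
      field_simp
    calc ∫ s in Ioi N, exp (-s / N) * s⁻¹ ≤ ∫ s in Ioi N, N⁻¹ * exp (-N⁻¹ * s) := by
          refine setIntegral_mono_on (hint.mono_set (Ioi_subset_Ioi hAN))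
            ((exp_neg_integrableOn_Ioi N (inv_pos.2 hN)).const_mul _) measurableSet_Ioi
            fun s (hs : N < s) => ?_
          calc exp (-s / N) * s⁻¹ ≤ exp (-s / N) * N⁻¹ := by gcongr
            _ = N⁻¹ * exp (-N⁻¹ * s) := by ring_nf
      _ = exp (-1) := hval
      _ ≤ 1 := exp_le_one_iff.2 (by norm_num)
  rw [dampedInvIntegral, ← Ioc_union_Ioi_eq_Ioi hAN,
    setIntegral_union (Ioc_disjoint_Ioi le_rfl) measurableSet_Ioi
      (hint.mono_set Ioc_subset_Ioi_self) (hint.mono_set (Ioi_subset_Ioi hAN))]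
  linarith

lemma tendsto_const_div_log (c : ℝ) : Tendsto (fun N => c / log N) atTop (𝓝 0) :=
  tendsto_const_nhds.div_atTop tendsto_log_atTop

lemma tendsto_add_const_div_log (c : ℝ) :
    Tendsto (fun N => (log N + c) / log N) atTop (𝓝 1) := by
  have h : Tendsto (fun N => 1 + c / log N) atTop (𝓝 (1 + 0)) :=
    tendsto_const_nhds.add (tendsto_const_div_log c)
  rw [add_zero] at h
  refine h.congr' ?_
  filter_upwards [tendsto_log_atTop.eventually_gt_atTop 0] with N hN
  field_simp

lemma tendsto_dampedInvIntegral_div_log {A : ℝ} (hA : 0 < A) :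
    Tendsto (fun N => dampedInvIntegral A N / log N) atTop (𝓝 1) := by
  refine tendsto_of_tendsto_of_tendsto_of_le_of_le' (tendsto_add_const_div_log (-log A - 1))
    (tendsto_add_const_div_log (-log A + 1)) ?_ ?_ <;>
  filter_upwards [eventually_ge_atTop A, tendsto_log_atTop.eventually_gt_atTop 0]
    with N hAN hlog
  · have := log_div_sub_one_le_dampedInvIntegral hA hAN
    rw [log_div (hA.trans_le hAN).ne' hA.ne'] at this
    gcongr
    linarith
  · have := dampedInvIntegral_le_log_div_add_one hA hAN
    rw [log_div (hA.trans_le hAN).ne' hA.ne'] at this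
    gcongr
    linarith

lemma integral_exp_neg_div_mul_bounds {p : ℝ → ℝ} {A N C a b : ℝ} (hA : 0 < A) (hN : 0 < N)
    (hmeas : Measurable p) (hnonneg : ∀ s ∈ Ioi 0, 0 ≤ p s) (hC : ∀ s ∈ Ioc 0 A, p s ≤ C)
    (hab : ∀ s ∈ Ioi A, a ≤ s * p s ∧ s * p s ≤ b) :
    a * dampedInvIntegral A N ≤ ∫ s in Ioi 0, exp (-s / N) * p s ∧
      ∫ s in Ioi 0, exp (-s / N) * p s ≤ C * A + b * dampedInvIntegral A N := by
  have hJ := integrableOn_exp_neg_div_mul_inv_Ioi hA hN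
  have hnonneg' : ∀ s ∈ Ioi 0, 0 ≤ exp (-s / N) * p s :=
    fun s hs => mul_nonneg (exp_pos _).le (hnonneg s hs)
  have hfactor : ∀ s ∈ Ioi A, exp (-s / N) * p s = exp (-s / N) * s⁻¹ * (s * p s) :=
    fun s (hs : A < s) => by field_simp [(hA.trans hs).ne']
  have hweight : ∀ s ∈ Ioi A, 0 ≤ exp (-s / N) * s⁻¹ :=
    fun s (hs : A < s) => by have := hA.trans hs; positivity
  have hnear_le : ∀ s ∈ Ioc 0 A, exp (-s / N) * p s ≤ C := fun s hs =>
    (mul_le_of_le_one_left (hnonneg s hs.1) (exp_neg_div_le_one hs.1.le hN.le)).trans (hC s hs)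
  have hnear : IntegrableOn (fun s => exp (-s / N) * p s) (Ioc 0 A) :=
    Measure.integrableOn_of_bounded (M := C) measure_Ioc_lt_top.ne (by fun_prop)
      ((ae_restrict_iff' measurableSet_Ioc).2 (.of_forall fun s hs => by
        rw [norm_of_nonneg (hnonneg' s hs.1)]
        exact hnear_le s hs))
  have hfar : IntegrableOn (fun s => exp (-s / N) * p s) (Ioi A) :=
    (hJ.mul_const b).mono' (by fun_prop) ((ae_restrict_iff' measurableSet_Ioi).2
      (.of_forall fun s (hs : A < s) => by
        rw [norm_of_nonneg (hnonneg' s (hA.trans hs)), hfactor s hs]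
        exact mul_le_mul_of_nonneg_left (hab s hs).2 (hweight s hs)))
  have hnear_bounds : 0 ≤ ∫ s in Ioc 0 A, exp (-s / N) * p s ∧
      ∫ s in Ioc 0 A, exp (-s / N) * p s ≤ C * A := by
    refine ⟨setIntegral_nonneg measurableSet_Ioc fun s hs => hnonneg' s hs.1, ?_⟩
    calc ∫ s in Ioc 0 A, exp (-s / N) * p s ≤ ∫ _ in Ioc 0 A, C :=
          setIntegral_mono_on hnear (integrableOn_const measure_Ioc_lt_top.ne) measurableSet_Ioc
            hnear_le
      _ = C * A := by simp [hA.le, mul_comm]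
  have hfar_bounds : a * dampedInvIntegral A N ≤ ∫ s in Ioi A, exp (-s / N) * p s ∧
      ∫ s in Ioi A, exp (-s / N) * p s ≤ b * dampedInvIntegral A N := by
    rw [dampedInvIntegral, ← integral_const_mul, ← integral_const_mul]
    refine ⟨setIntegral_mono_on (hJ.const_mul a) hfar measurableSet_Ioi fun s hs => ?_,
      setIntegral_mono_on hfar (hJ.const_mul b) measurableSet_Ioi fun s hs => ?_⟩ <;>
    rw [hfactor s hs, mul_comm _ (exp _ * _)]
    · exact mul_le_mul_of_nonneg_left (hab s hs).1 (hweight s hs)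
    · exact mul_le_mul_of_nonneg_left (hab s hs).2 (hweight s hs)
  rw [← Ioc_union_Ioi_eq_Ioi hA.le,
    setIntegral_union (Ioc_disjoint_Ioi le_rfl) measurableSet_Ioi hnear hfar]
  constructor <;> linarith [hnear_bounds.1, hnear_bounds.2, hfar_bounds.1, hfar_bounds.2]

lemma tendsto_of_forall_pos_eventually_between {α : Type*} {l : Filter α} {u : α → ℝ} {c : ℝ}
    (h : ∀ ε > 0, ∃ lo hi : α → ℝ, Tendsto lo l (𝓝 (c - ε)) ∧ Tendsto hi l (𝓝 (c + ε)) ∧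
      ∀ᶠ x in l, lo x ≤ u x ∧ u x ≤ hi x) :
    Tendsto u l (𝓝 c) := by
  rw [tendsto_order]
  refine ⟨fun a ha => ?_, fun b hb => ?_⟩
  · obtain ⟨lo, _, hlo, -, hbetween⟩ := h ((c - a) / 2) (by linarith)
    filter_upwards [hlo.eventually (eventually_gt_nhds (show a < c - (c - a) / 2 by linarith)),
      hbetween] with x hx hxu
    exact hx.trans_le hxu.1
  · obtain ⟨_, hi, -, hhi, hbetween⟩ := h ((b - c) / 2) (by linarith)
    filter_upwards [hhi.eventually (eventually_lt_nhds (show c + (b - c) / 2 < b by linarith)),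
      hbetween] with x hx hxu
    exact hxu.2.trans_lt hx

theorem statement6_general (p : ℝ → ℝ) (f : ℝ)
    (hmeas : Measurable p) (hpos : ∀ s, 0 ≤ p s)
    (hloc : ∀ K : ℝ, 0 < K → ∃ C : ℝ, ∀ s ∈ Set.Icc (0 : ℝ) K, p s ≤ C)
    (hlim : Filter.Tendsto (fun s : ℝ => s * p s) Filter.atTop (nhds f)) :
    Filter.Tendsto
      (fun N : ℝ => (1 / Real.log N) * ∫ s in Set.Ioi (0 : ℝ), Real.exp (-s / N) * p s)
      Filter.atTop (nhds f) := by
  refine tendsto_of_forall_pos_eventually_between fun ε hε => ?_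
  obtain ⟨A₀, hA₀⟩ := eventually_atTop.1 <|
    hlim.eventually (Icc_mem_nhds (sub_lt_self f hε) (lt_add_of_pos_right f hε))
  set A := max A₀ 1
  have hA : 0 < A := lt_max_of_lt_right one_pos
  obtain ⟨C, hC⟩ := hloc A hA
  have hJ := tendsto_dampedInvIntegral_div_log hA
  refine ⟨fun N => (f - ε) * (dampedInvIntegral A N / log N),
    fun N => C * A / log N + (f + ε) * (dampedInvIntegral A N / log N),
    by simpa using hJ.const_mul (f - ε),
    by simpa using (tendsto_const_div_log (C * A)).add (hJ.const_mul (f + ε)), ?_⟩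
  filter_upwards [eventually_gt_atTop 1] with N hN
  obtain ⟨hlo, hhi⟩ := integral_exp_neg_div_mul_bounds hA (one_pos.trans hN) hmeas
    (fun s _ => hpos s) (fun s hs => hC s (Ioc_subset_Icc_self hs))
    (fun s hs => hA₀ s ((le_max_left _ _).trans hs.le))
  have hlog : 0 < log N := log_pos hN
  constructor
  · rw [← mul_div_assoc, one_div_mul_eq_div]
    gcongr
  · rw [one_div_mul_eq_div, ← mul_div_assoc, ← add_div]
    gcongr

/-- if `p ≥ 0` is measurable, bounded on compact sets and `s·p s → f > 0`
as `s → ∞`, then `(1/log N)·∫_0^∞ e^{-s/N}·p s ds → f` as `N → ∞`. -/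
theorem statement6 (p : ℝ → ℝ) (f : ℝ) (hf : 0 < f)
    (hmeas : Measurable p) (hpos : ∀ s, 0 ≤ p s)
    (hloc : ∀ K : ℝ, 0 < K → ∃ C : ℝ, ∀ s ∈ Set.Icc (0 : ℝ) K, p s ≤ C)
    (hlim : Filter.Tendsto (fun s : ℝ => s * p s) Filter.atTop (nhds f)) :
    Filter.Tendsto
      (fun N : ℝ => (1 / Real.log N) * ∫ s in Set.Ioi (0 : ℝ), Real.exp (-s / N) * p s)
      Filter.atTop (nhds f) :=
  statement6_general p f hmeas hpos hloc hlim
end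

section
/- Let 1 < α < 2, f > 0, and let p : [0,∞) → [0,∞) be measurable, bounded on compact sets, with r^{1/α}·p(r) → f as r → ∞. Then for any a, b > 0, lim_{N→∞} N^{-(2−1/α)} ∫_0^{aN} ∫_0^{bN} p(s+θ) ds dθ = f·(α²/((α−1)(2α−1)))·((a+b)^{2−1/α} − a^{2−1/α} − b^{2−1/α}). -/
/-!
Write `P` and `Q` for the first and second primitives of `p`. Karamata's theorem on
integrating regularly varying functions shows that `x^β g(x) → L` with `β < 1` implies
`T^(β-1) ∫₀ᵀ g → L/(1-β)`; applied twice (with `β = 1/α`, then `β = 1/α - 1`) it gives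
`T^(-(2-1/α)) Q(T) → f α²/((α-1)(2α-1))`. The double integral equals
`Q((a+b)N) - Q(aN) - Q(bN)`, and each term scales like `c^(2-1/α) N^(2-1/α)`.
-/

open Filter MeasureTheory Set Asymptotics Topology intervalIntegral

lemma intervalIntegrable_indicator_Ici_of_bounded {p : ℝ → ℝ} (hp : Measurable p)
    (hbdd : ∀ K, ∃ C, ∀ r ∈ Icc 0 K, ‖p r‖ ≤ C) (a b : ℝ) :
    IntervalIntegrable ((Ici 0).indicator p) volume a b := by
  obtain ⟨C, hC⟩ := hbdd (max a b)
  rw [intervalIntegrable_iff]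
  refine Measure.integrableOn_of_bounded (M := max C 0) measure_Ioc_lt_top.ne
    (hp.indicator measurableSet_Ici).aestronglyMeasurable ?_
  filter_upwards [ae_restrict_mem measurableSet_uIoc] with x hx
  by_cases hx0 : x ∈ Ici 0
  · rw [indicator_of_mem hx0]
    exact (hC x ⟨hx0, hx.2⟩).trans (le_max_left _ _)
  · rw [indicator_of_notMem hx0, norm_zero]
    exact le_max_right _ _

lemma isLittleO_integral_of_isLittleO_rpow {h : ℝ → ℝ} {β : ℝ} (hβ : β < 1)
    (hint : ∀ a b, IntervalIntegrable h volume a b) (ho : h =o[atTop] fun x => x ^ (-β)) :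
    (fun T => ∫ x in (0 : ℝ)..T, h x) =o[atTop] fun T => T ^ (1 - β) := by
  have h1β : 0 < 1 - β := by linarith
  refine isLittleO_iff_forall_isBigOWith.2 fun c hc => ?_
  obtain ⟨R, hR⟩ := eventually_atTop.1
    ((ho.def (c := c * (1 - β) / 2) (by positivity)).and (eventually_gt_atTop 0))
  have hR0 : 0 < R := (hR R le_rfl).2
  have htail : IsBigOWith (c / 2) atTop (fun T => ∫ x in R..T, h x) fun T => T ^ (1 - β) := by
    refine IsBigOWith.of_bound ?_
    filter_upwards [eventually_ge_atTop R] with T hRT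
    have hT0 : 0 < T := hR0.trans_le hRT
    calc ‖∫ x in R..T, h x‖ ≤ ∫ x in R..T, c * (1 - β) / 2 * x ^ (-β) := by
          refine norm_integral_le_of_norm_le hRT (ae_of_all _ fun x hx => ?_)
            ((intervalIntegrable_rpow' (by linarith)).const_mul _)
          have := (hR x hx.1.le).1
          rwa [Real.norm_of_nonneg (Real.rpow_nonneg (hR0.trans hx.1).le _)] at this
      _ = c / 2 * (T ^ (1 - β) - R ^ (1 - β)) := by
          rw [intervalIntegral.integral_const_mul, integral_rpow (Or.inl (by linarith)),
            show -β + 1 = 1 - β by ring]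
          field_simp
      _ ≤ c / 2 * ‖T ^ (1 - β)‖ := by
          rw [Real.norm_of_nonneg (Real.rpow_nonneg hT0.le _)]
          have := Real.rpow_nonneg hR0.le (1 - β)
          gcongr; linarith
  have hhead : (fun _ => ∫ x in (0 : ℝ)..R, h x) =o[atTop] fun T => T ^ (1 - β) :=
    isLittleO_const_left.2 <| Or.inr <| tendsto_norm_atTop_atTop.comp (tendsto_rpow_atTop h1β)
  refine (hhead.add_isBigOWith htail (half_lt_self hc)).congr_left fun T => ?_
  exact integral_add_adjacent_intervals (hint 0 R) (hint R T)

lemma tendsto_rpow_mul_integral_of_tendsto_rpow_mul {g : ℝ → ℝ} {β L : ℝ} (hβ : β < 1)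
    (hint : ∀ a b, IntervalIntegrable g volume a b)
    (hlim : Tendsto (fun x => x ^ β * g x) atTop (𝓝 L)) :
    Tendsto (fun T => T ^ (β - 1) * ∫ x in (0 : ℝ)..T, g x) atTop (𝓝 (L / (1 - β))) := by
  have h1β : 1 - β ≠ 0 := by linarith
  have hpow_int (a b : ℝ) : IntervalIntegrable (fun x => x ^ (-β)) volume a b :=
    intervalIntegrable_rpow' (by linarith)
  -- `x ^ (-β)` has the explicit primitive `x ^ (1-β) / (1-β)`, so it suffices to treat `L = 0`.
  set h := fun x => g x - L * x ^ (-β)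
  have hh_int (a b : ℝ) : IntervalIntegrable h volume a b :=
    (hint a b).sub ((hpow_int a b).const_mul L)
  have hho : h =o[atTop] fun x => x ^ (-β) := by
    refine (isLittleO_iff_tendsto' ?_).2 ?_
    · filter_upwards [eventually_gt_atTop 0] with x hx h0
      exact absurd h0 (Real.rpow_pos_of_pos hx _).ne'
    · rw [← sub_self L]
      refine (hlim.sub_const L).congr' ?_
      filter_upwards [eventually_gt_atTop 0] with x hx
      have := (Real.rpow_pos_of_pos hx β).ne'
      simp only [h, Real.rpow_neg hx.le]
      field_simp
  have hrem := (isLittleO_integral_of_isLittleO_rpow hβ hh_int hho).tendsto_div_nhds_zero.const_add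
    (L / (1 - β))
  rw [add_zero] at hrem
  refine hrem.congr' ?_
  filter_upwards [eventually_gt_atTop 0] with T hT
  have hsplit : ∫ x in (0 : ℝ)..T, g x =
      (∫ x in (0 : ℝ)..T, h x) + L * (T ^ (1 - β) / (1 - β)) := by
    simp only [h]
    rw [integral_sub (hint 0 T) ((hpow_int 0 T).const_mul L), intervalIntegral.integral_const_mul,
      integral_rpow (Or.inl (by linarith)), show -β + 1 = 1 - β by ring, Real.zero_rpow h1β]
    ring
  have hTpow : T ^ (β - 1) = (T ^ (1 - β))⁻¹ := by
    rw [← Real.rpow_neg hT.le, neg_sub]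
  have := (Real.rpow_pos_of_pos hT (1 - β)).ne'
  rw [hsplit, hTpow]
  field_simp
  ring

lemma integral_integral_comp_add {g : ℝ → ℝ} (hint : ∀ a b, IntervalIntegrable g volume a b)
    (A B : ℝ) :
    ∫ θ in (0 : ℝ)..A, ∫ s in (0 : ℝ)..B, g (s + θ) =
      (∫ x in (0 : ℝ)..(A + B), ∫ y in (0 : ℝ)..x, g y)
        - (∫ x in (0 : ℝ)..A, ∫ y in (0 : ℝ)..x, g y)
        - ∫ x in (0 : ℝ)..B, ∫ y in (0 : ℝ)..x, g y := by
  set G := fun x => ∫ y in (0 : ℝ)..x, g y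
  have hG : Continuous G := continuous_primitive hint 0
  have hinner (θ : ℝ) : ∫ s in (0 : ℝ)..B, g (s + θ) = G (B + θ) - G θ := by
    rw [integral_comp_add_right, zero_add, integral_interval_sub_left (hint 0 _) (hint 0 _)]
  have hshift : IntervalIntegrable (fun θ => G (B + θ)) volume 0 A :=
    (hG.comp (continuous_const_add B)).intervalIntegrable _ _
  simp only [hinner]
  rw [integral_sub hshift (hG.intervalIntegrable _ _), integral_comp_add_left G, add_zero,
    ← integral_interval_sub_left (hG.intervalIntegrable 0 _) (hG.intervalIntegrable 0 B),
    add_comm B]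
  ring

lemma tendsto_rpow_neg_mul_comp_const_mul {H : ℝ → ℝ} {γ K c : ℝ} (hc : 0 < c)
    (hH : Tendsto (fun T => T ^ (-γ) * H T) atTop (𝓝 K)) :
    Tendsto (fun N => N ^ (-γ) * H (c * N)) atTop (𝓝 (c ^ γ * K)) := by
  refine ((hH.comp (tendsto_id.const_mul_atTop hc)).const_mul (c ^ γ)).congr' ?_
  filter_upwards [eventually_gt_atTop 0] with N hN
  have hcγ : c ^ γ * c ^ (-γ) = 1 := by rw [← Real.rpow_add hc, add_neg_cancel, Real.rpow_zero]
  simp only [Function.comp_apply, id, Real.mul_rpow hc.le hN.le]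
  linear_combination (N ^ (-γ) * H (c * N)) * hcγ

lemma tendsto_rpow_mul_integral_integral_comp_add {g : ℝ → ℝ} {β L : ℝ} (hβ : β < 1)
    (hint : ∀ a b, IntervalIntegrable g volume a b)
    (hlim : Tendsto (fun x => x ^ β * g x) atTop (𝓝 L)) {a b : ℝ} (ha : 0 < a) (hb : 0 < b) :
    Tendsto (fun N => N ^ (-(2 - β)) *
        ∫ θ in (0 : ℝ)..(a * N), ∫ s in (0 : ℝ)..(b * N), g (s + θ)) atTop
      (𝓝 (L / ((1 - β) * (2 - β)) * ((a + b) ^ (2 - β) - a ^ (2 - β) - b ^ (2 - β)))) := by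
  have hQ : Tendsto (fun T => T ^ (-(2 - β)) * ∫ x in (0 : ℝ)..T, ∫ y in (0 : ℝ)..x, g y)
      atTop (𝓝 (L / ((1 - β) * (2 - β)))) := by
    have hP := tendsto_rpow_mul_integral_of_tendsto_rpow_mul hβ hint hlim
    have := tendsto_rpow_mul_integral_of_tendsto_rpow_mul (by linarith)
      (fun a b => (continuous_primitive hint 0).intervalIntegrable a b) hP
    rwa [show β - 1 - 1 = -(2 - β) by ring, div_div, show 1 - (β - 1) = 2 - β by ring] at this
  have hab := ((tendsto_rpow_neg_mul_comp_const_mul (add_pos ha hb) hQ).sub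
    (tendsto_rpow_neg_mul_comp_const_mul ha hQ)).sub (tendsto_rpow_neg_mul_comp_const_mul hb hQ)
  convert hab using 2 with N
  · rw [integral_integral_comp_add hint, add_mul]
    ring
  · ring

theorem statement11_general (α f : ℝ) (hα1 : 1 < α)
    (p : ℝ → ℝ) (hmeas : Measurable p) (hpos : ∀ r, 0 ≤ p r)
    (hloc : ∀ K : ℝ, 0 < K → ∃ C : ℝ, ∀ r ∈ Set.Icc (0 : ℝ) K, p r ≤ C)
    (hlim : Filter.Tendsto (fun r : ℝ => r ^ (1 / α) * p r) Filter.atTop (nhds f)) :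
    ∀ a b : ℝ, 0 < a → 0 < b →
      Filter.Tendsto
        (fun N : ℝ => N ^ (-(2 - 1 / α)) *
          ∫ θ in (0 : ℝ)..(a * N), ∫ s in (0 : ℝ)..(b * N), p (s + θ))
        Filter.atTop
        (nhds (f * (α ^ 2 / ((α - 1) * (2 * α - 1))) *
          ((a + b) ^ (2 - 1 / α) - a ^ (2 - 1 / α) - b ^ (2 - 1 / α)))) := by
  intro a b ha hb
  -- `p` only matters on `[0, ∞)`; extending it by zero makes it integrable on every interval.
  set q := (Ici 0).indicator p
  have hbdd (K : ℝ) : ∃ C, ∀ r ∈ Icc 0 K, ‖p r‖ ≤ C := by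
    obtain ⟨C, hC⟩ := hloc (max K 1) (by positivity)
    exact ⟨C, fun r hr => (Real.norm_of_nonneg (hpos r)).trans_le
      (hC r ⟨hr.1, hr.2.trans (le_max_left _ _)⟩)⟩
  have hqlim : Tendsto (fun r => r ^ (1 / α) * q r) atTop (𝓝 f) := by
    refine hlim.congr' ?_
    filter_upwards [eventually_ge_atTop 0] with r hr
    rw [show q r = p r from indicator_of_mem (mem_Ici.2 hr) p]
  have hconst : f * (α ^ 2 / ((α - 1) * (2 * α - 1))) = f / ((1 - 1 / α) * (2 - 1 / α)) := by
    have : α - 1 ≠ 0 := by linarith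
    have : 2 * α - 1 ≠ 0 := by linarith
    field_simp
  rw [hconst]
  refine (tendsto_rpow_mul_integral_integral_comp_add ((div_lt_one (by linarith)).2 hα1)
    (intervalIntegrable_indicator_Ici_of_bounded hmeas hbdd) hqlim ha hb).congr' ?_
  filter_upwards [eventually_gt_atTop 0] with N hN
  refine congrArg _ (integral_congr fun θ hθ => integral_congr fun s hs => ?_)
  rw [uIcc_of_le (by positivity)] at hθ hs
  exact indicator_of_mem (mem_Ici.2 (add_nonneg hs.1 hθ.1)) p

/-- for `1 < α < 2`, `f > 0`, and `p ≥ 0` measurable, bounded on compact sets,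
with `r^{1/α}·p r → f`, one has for all `a b > 0`:
`N^{-(2−1/α)} ∫_0^{aN} ∫_0^{bN} p (s+θ) ds dθ →
f·(α²/((α−1)(2α−1)))·((a+b)^{2−1/α} − a^{2−1/α} − b^{2−1/α})` as `N → ∞`. -/
theorem statement11 (α f : ℝ) (hα1 : 1 < α) (hα2 : α < 2) (hf : 0 < f)
    (p : ℝ → ℝ) (hmeas : Measurable p) (hpos : ∀ r, 0 ≤ p r)
    (hloc : ∀ K : ℝ, 0 < K → ∃ C : ℝ, ∀ r ∈ Set.Icc (0 : ℝ) K, p r ≤ C)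
    (hlim : Filter.Tendsto (fun r : ℝ => r ^ (1 / α) * p r) Filter.atTop (nhds f)) :
    ∀ a b : ℝ, 0 < a → 0 < b →
      Filter.Tendsto
        (fun N : ℝ => N ^ (-(2 - 1 / α)) *
          ∫ θ in (0 : ℝ)..(a * N), ∫ s in (0 : ℝ)..(b * N), p (s + θ))
        Filter.atTop
        (nhds (f * (α ^ 2 / ((α - 1) * (2 * α - 1))) *
          ((a + b) ^ (2 - 1 / α) - a ^ (2 - 1 / α) - b ^ (2 - 1 / α)))) :=
  statement11_general α f hα1 p hmeas hpos hloc hlim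
end

section
/- Let 1 < α < 2, β' > 0, f > 0, and t_i ≤ t_j. Then 2·f·∫_0^{t_i} ∫_0^{(t_i−s)β'} (θ^{−1/α} − (θ + (t_j−s)β')^{−1/α}) dθ ds = (α²/((α−1)(2α−1)))·f·(β')^{1−1/α}·(2t_i^{2−1/α} + 2t_j^{2−1/α} − (t_j−t_i)^{2−1/α} − (t_i+t_j)^{2−1/α}). -/
/-!
Integrating `θ ↦ θ ^ r - (θ + B) ^ r` explicitly (with `r = -1/α > -1`) and pulling `β'` out
by homogeneity turns the inner integral into `β' ^ p / p` times a combination of `p`-th powers of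
affine functions of `s`, where `p = 1 - 1/α`; these integrate to `(p + 1)`-th powers, and
`1 / (p (p + 1)) = α² / ((α - 1)(2α - 1))`.
-/

open intervalIntegral MeasureTheory

lemma integral_rpow_sub_rpow_add {r : ℝ} (hr : -1 < r) (A B : ℝ) :
    ∫ θ in (0 : ℝ)..A, (θ ^ r - (θ + B) ^ r)
      = (A ^ (r + 1) + B ^ (r + 1) - (A + B) ^ (r + 1)) / (r + 1) := by
  have hr0 : r + 1 ≠ 0 := by linarith
  have h1 : IntervalIntegrable (fun θ : ℝ => θ ^ r) volume 0 A :=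
    intervalIntegral.intervalIntegrable_rpow' hr
  have h2 : IntervalIntegrable (fun θ : ℝ => (θ + B) ^ r) volume 0 A := by
    simpa using
      (intervalIntegral.intervalIntegrable_rpow' (a := B) (b := A + B) hr).comp_add_right B
  rw [integral_sub h1 h2, integral_rpow (Or.inl hr), integral_comp_add_right (· ^ r) B,
    integral_rpow (Or.inl hr), Real.zero_rpow hr0, zero_add]
  ring

lemma integral_rpow_sub_rpow_add_mul {r β a b : ℝ} (hr : -1 < r) (hβ : 0 ≤ β) (ha : 0 ≤ a)
    (hb : 0 ≤ b) :
    ∫ θ in (0 : ℝ)..(a * β), (θ ^ r - (θ + b * β) ^ r)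
      = β ^ (r + 1) / (r + 1) * (a ^ (r + 1) + b ^ (r + 1) - (a + b) ^ (r + 1)) := by
  rw [integral_rpow_sub_rpow_add hr, ← add_mul, Real.mul_rpow ha hβ, Real.mul_rpow hb hβ,
    Real.mul_rpow (add_nonneg ha hb) hβ]
  ring

lemma integral_sub_mul_rpow {p : ℝ} (hp : -1 < p) (c k t : ℝ) (hk : k ≠ 0) :
    ∫ s in (0 : ℝ)..t, (c - k * s) ^ p
      = (c ^ (p + 1) - (c - k * t) ^ (p + 1)) / (k * (p + 1)) := by
  rw [integral_comp_mul_left (fun x => (c - x) ^ p) hk, integral_comp_sub_left (· ^ p) c,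
    integral_rpow (Or.inl hp), smul_eq_mul, mul_zero, sub_zero]
  field_simp

lemma intervalIntegrable_sub_mul_rpow {p : ℝ} (hp : 0 ≤ p) (c k a b : ℝ) :
    IntervalIntegrable (fun s : ℝ => (c - k * s) ^ p) volume a b :=
  ((Real.continuous_rpow_const hp).comp (by fun_prop)).intervalIntegrable a b

theorem statement12_general (α β' f ti tj : ℝ) (hα1 : 1 < α)
    (hβ' : 0 < β') (hti : 0 ≤ ti) (htij : ti ≤ tj) :
    2 * f * ∫ s in (0 : ℝ)..ti, ∫ θ in (0 : ℝ)..((ti - s) * β'),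
        (θ ^ (-(1 / α)) - (θ + (tj - s) * β') ^ (-(1 / α)))
      = (α ^ 2 / ((α - 1) * (2 * α - 1))) * f * β' ^ (1 - 1 / α) *
        (2 * ti ^ (2 - 1 / α) + 2 * tj ^ (2 - 1 / α)
          - (tj - ti) ^ (2 - 1 / α) - (ti + tj) ^ (2 - 1 / α)) := by
  have hα0 : 0 < α := by linarith
  have hr : -1 < -(1 / α) := by rw [neg_lt_neg_iff, div_lt_one hα0]; exact hα1
  have hp : 0 < -(1 / α) + 1 := by linarith
  have hinner : Set.EqOn
      (fun s => ∫ θ in (0 : ℝ)..((ti - s) * β'),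
        (θ ^ (-(1 / α)) - (θ + (tj - s) * β') ^ (-(1 / α))))
      (fun s => β' ^ (-(1 / α) + 1) / (-(1 / α) + 1) * ((ti - 1 * s) ^ (-(1 / α) + 1)
        + (tj - 1 * s) ^ (-(1 / α) + 1) - (ti + tj - 2 * s) ^ (-(1 / α) + 1)))
      (Set.uIcc 0 ti) := by
    intro s hs
    rw [Set.uIcc_of_le hti] at hs
    dsimp only
    rw [integral_rpow_sub_rpow_add_mul hr hβ'.le (sub_nonneg.2 hs.2)
        (sub_nonneg.2 (hs.2.trans htij)), one_mul,
      show ti - s + (tj - s) = ti + tj - 2 * s by ring]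
  have hint := intervalIntegrable_sub_mul_rpow hp.le
  rw [integral_congr hinner, intervalIntegral.integral_const_mul,
    integral_sub ((hint ..).add (hint ..)) (hint ..), integral_add (hint ..) (hint ..),
    integral_sub_mul_rpow (by linarith) _ _ _ one_ne_zero,
    integral_sub_mul_rpow (by linarith) _ _ _ one_ne_zero,
    integral_sub_mul_rpow (by linarith) _ _ _ two_ne_zero]
  have hq : -(1 / α) + 1 + 1 = 2 - 1 / α := by ring
  have hp' : -(1 / α) + 1 = 1 - 1 / α := by ring
  rw [hq, hp', one_mul, one_mul, show ti + tj - 2 * ti = tj - ti by ring, sub_self,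
    Real.zero_rpow (by linarith)]
  have h1 : α - 1 ≠ 0 := by linarith
  have h2 : 2 * α - 1 ≠ 0 := by linarith
  field_simp
  ring

/-- for `1 < α < 2`, `β' > 0`, `f > 0` and `0 ≤ tᵢ ≤ tⱼ`,
`2f·∫_0^{tᵢ} ∫_0^{(tᵢ−s)β'} (θ^{−1/α} − (θ+(tⱼ−s)β')^{−1/α}) dθ ds
= (α²/((α−1)(2α−1)))·f·β'^{1−1/α}·(2tᵢ^{2−1/α} + 2tⱼ^{2−1/α} − (tⱼ−tᵢ)^{2−1/α} − (tᵢ+tⱼ)^{2−1/α})`. -/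
theorem statement12 (α β' f ti tj : ℝ) (hα1 : 1 < α) (hα2 : α < 2)
    (hβ' : 0 < β') (hf : 0 < f) (hti : 0 ≤ ti) (htij : ti ≤ tj) :
    2 * f * ∫ s in (0 : ℝ)..ti, ∫ θ in (0 : ℝ)..((ti - s) * β'),
        (θ ^ (-(1 / α)) - (θ + (tj - s) * β') ^ (-(1 / α)))
      = (α ^ 2 / ((α - 1) * (2 * α - 1))) * f * β' ^ (1 - 1 / α) *
        (2 * ti ^ (2 - 1 / α) + 2 * tj ^ (2 - 1 / α)
          - (tj - ti) ^ (2 - 1 / α) - (ti + tj) ^ (2 - 1 / α)) :=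
  statement12_general α β' f ti tj hα1 hβ' hti htij
end
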